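/- The (2,2)-3SAT formula φ is satisfiable if and only if the following modified instance admits a feasible matching. -/

import Mathlib

open scoped Classical

noncomputable section

/-- An SMTI-Diverse instance: students `S`, colleges `C`, types `T`.
Preferences are encoded by rank functions (smaller rank = more preferred);
ties are allowed.  `acc` is the (symmetric) acceptability relation, `tau`
the 0/1 type vectors (encoded as `Bool`), `lq`/`uq` the lower/upper quota
vectors and `cap` the capacities. -/
structure SMTI (S C T : Type) [Fintype S] [Fintype C] [Fintype T] where
  acc : S → C → Prop
  tau : S → T → Bool
  rankS : S → C → ℕ
  rankC : C → S → ℕ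
  lq : C → T → ℕ
  uq : C → T → ℕ
  cap : C → ℕ

namespace SMTI

variable {S C T : Type} [Fintype S] [Fintype C] [Fintype T]

/-- `f : S → Option C` encodes a matching: every assigned college is acceptable. -/
def IsMatching (I : SMTI S C T) (f : S → Option C) : Prop :=
  ∀ u w, f u = some w → I.acc u w

/-- The set `M(w)` of students assigned to college `w`. -/
def assigned (I : SMTI S C T) (f : S → Option C) (w : C) : Finset S :=
  Finset.univ.filter fun u => f u = some w

/-- The number of students of type `z` assigned to `w`. -/
def typeLoad (I : SMTI S C T) (f : S → Option C) (w : C) (z : T) : ℕ :=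
  ∑ u ∈ I.assigned f w, (I.tau u z).toNat

/-- Feasibility: capacities respected and quotas met at all colleges. -/
def Feasible (I : SMTI S C T) (f : S → Option C) : Prop :=
  ∀ w, (I.assigned f w).card ≤ I.cap w ∧
    ∀ z, I.lq w z ≤ I.typeLoad f w z ∧ I.typeLoad f w z ≤ I.uq w z

/-- `u` strictly prefers `w` to its assigned college (in particular if unmatched). -/
def PrefersTo (I : SMTI S C T) (f : S → Option C) (u : S) (w : C) : Prop :=
  ∀ w', f u = some w' → I.rankS u w < I.rankS u w'

/-- `{u,w}` is a blocking pair of `f` witnessed by `U' ⊆ M(w)`. -/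
def BlocksWith (I : SMTI S C T) (f : S → Option C) (u : S) (w : C) (U' : Finset S) : Prop :=
  f u ≠ some w ∧ I.acc u w ∧ I.PrefersTo f u w ∧
  U' ⊆ I.assigned f w ∧
  (∀ u' ∈ U', I.rankC w u < I.rankC w u') ∧
  (I.assigned f w \ U').card + 1 ≤ I.cap w ∧
  ∀ z, I.lq w z ≤ (I.tau u z).toNat + ∑ u' ∈ I.assigned f w \ U', (I.tau u' z).toNat ∧
    (I.tau u z).toNat + ∑ u' ∈ I.assigned f w \ U', (I.tau u' z).toNat ≤ I.uq w z

/-- `{u,w}` is a blocking pair of `f` (with some witness). -/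
def BlockingPair (I : SMTI S C T) (f : S → Option C) (u : S) (w : C) : Prop :=
  ∃ U', I.BlocksWith f u w U'

/-- Stability: no blocking pair at all. -/
def Stable (I : SMTI S C T) (f : S → Option C) : Prop :=
  ∀ u w, ¬ I.BlockingPair f u w

end SMTI

section Mod223SAT

/-- Students of the modified construction: for each variable `i`, the variable
students `x_i = (i, Sum.inl 0)`, `y_i = (i, Sum.inl 1)` and the literal students
`u_i^z = (i, Sum.inr (true, z))`, `v_i^z = (i, Sum.inr (false, z))` (`z ∈ Fin 2`). -/
abbrev MSt (r : ℕ) := Fin r × (Fin 2 ⊕ Bool × Fin 2)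

/-- Colleges of the modified construction: variable colleges
`w_i = Sum.inl (i, 0)`, `p_i = Sum.inl (i, 1)` and clause colleges
`c_j = Sum.inr j`. -/
abbrev MCo (r s : ℕ) := (Fin r × Fin 2) ⊕ Fin s

/-- The modified (feasibility-only) instance built from a (2,2)-3SAT formula;
`occ` assigns to each literal `(pol, i)` and each `z ∈ Fin 2` the slot
(clause, position) of the `z`-th occurrence of that literal, bijectively. -/
def MInst (r s : ℕ) (occ : Bool × Fin r × Fin 2 ≃ Fin s × Fin 3) :
    SMTI (MSt r) (MCo r s) (Fin 3) where
  acc := fun st c =>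
    match st with
    | (i, Sum.inl _) => c = Sum.inl (i, 0) ∨ c = Sum.inl (i, 1)
    | (i, Sum.inr (pol, z)) =>
        c = Sum.inl (i, if pol then 0 else 1) ∨ c = Sum.inr (occ (pol, i, z)).1
  tau := fun st z =>
    match st with
    | (_, Sum.inl k) => if k = 0 then decide (z ≠ 1) else decide (z ≠ 0)
    | (_, Sum.inr (_, zz)) => if zz = 0 then true else decide (z = 2)
  rankS := fun _ _ => 0
  rankC := fun _ _ => 0
  lq := fun c z =>
    match c with
    | Sum.inl _ => if z = 2 then 2 else 1
    | Sum.inr _ => if z = 2 then 1 else 0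
  uq := fun c z =>
    match c with
    | Sum.inl _ => if z = 2 then 2 else 1
    | Sum.inr _ => 1
  cap := fun c =>
    match c with
    | Sum.inl _ => 2
    | Sum.inr _ => 1

end Mod223SAT

/-! Every student has type 3, so the quotas `(1,1,2)` of a variable college force it to hold
exactly two students, one of type 1 and one of type 2: either both variable students `x_i, y_i`
or both literal students of its polarity. A clause college holds exactly one student, which is
a literal student of that clause; having left its variable college, it forces `x_i` into that
college, so "`x_i` is matched to `w_i`" is a satisfying assignment. Conversely, a satisfying
assignment sends `x_i, y_i` to the college of the true literal of `x_i`, the false literal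
students to theirs, and one true literal student of each clause to that clause. -/

namespace SMTI

variable {S C T : Type} [Fintype S] [Fintype C] [Fintype T]
  (I : SMTI S C T) (f : S → Option C)

@[simp]
theorem mem_assigned {w : C} {u : S} : u ∈ I.assigned f w ↔ f u = some w := by
  simp [assigned]

theorem typeLoad_le_card (w : C) (z : T) : I.typeLoad f w z ≤ (I.assigned f w).card := by
  rw [typeLoad, Finset.card_eq_sum_ones]
  exact Finset.sum_le_sum fun u _ => Bool.toNat_le _

theorem typeLoad_eq_card {z : T} (hz : ∀ u, I.tau u z = true) (w : C) :
    I.typeLoad f w z = (I.assigned f w).card := by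
  rw [typeLoad, Finset.card_eq_sum_ones]
  simp [hz]

theorem typeLoad_eq_sum_of_assigned_subset {w : C} {A : Finset S} (hA : I.assigned f w ⊆ A)
    (z : T) : I.typeLoad f w z = ∑ u ∈ A, if f u = some w then (I.tau u z).toNat else 0 := by
  rw [← Finset.sum_filter, typeLoad]
  congr 1
  ext u
  simpa using fun hu => hA ((I.mem_assigned f).2 hu)

def MeetsQuota (w : C) : Prop :=
  ∀ z, I.lq w z ≤ I.typeLoad f w z ∧ I.typeLoad f w z ≤ I.uq w z

end SMTI

namespace MInst

variable {r s : ℕ} {occ : Bool × Fin r × Fin 2 ≃ Fin s × Fin 3}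
  {f : MSt r → Option (MCo r s)}

/-- The variable college of the literal students of polarity `pol`: `w_i` if `pol`, else `p_i`. -/
def litCollege (i : Fin r) (pol : Bool) : MCo r s := Sum.inl (i, if pol then 0 else 1)

theorem litCollege_inj {i : Fin r} {pol pol' : Bool} :
    (litCollege i pol : MCo r s) = litCollege i pol' ↔ pol = pol' := by
  cases pol <;> cases pol' <;> simp [litCollege]

def literalStudent (ℓ : Bool × Fin r × Fin 2) : MSt r := (ℓ.2.1, Sum.inr (ℓ.1, ℓ.2.2))

theorem literalStudent_injective : Function.Injective (literalStudent (r := r)) := by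
  rintro ⟨pol, i, z⟩ ⟨pol', i', z'⟩ h
  simp_all [literalStudent]

@[simp]
theorem lq_inl (c : Fin r × Fin 2) (z : Fin 3) :
    (MInst r s occ).lq (Sum.inl c) z = if z = 2 then 2 else 1 := rfl

@[simp]
theorem uq_inl (c : Fin r × Fin 2) (z : Fin 3) :
    (MInst r s occ).uq (Sum.inl c) z = if z = 2 then 2 else 1 := rfl

@[simp]
theorem lq_inr (j : Fin s) (z : Fin 3) :
    (MInst r s occ).lq (Sum.inr j) z = if z = 2 then 1 else 0 := rfl

@[simp]
theorem uq_inr (j : Fin s) (z : Fin 3) : (MInst r s occ).uq (Sum.inr j) z = 1 := rfl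

@[simp]
theorem tau_inl (i : Fin r) (k : Fin 2) (z : Fin 3) :
    (MInst r s occ).tau (i, Sum.inl k) z =
      if k = 0 then decide (z ≠ 1) else decide (z ≠ 0) := rfl

@[simp]
theorem tau_inr (i : Fin r) (pol : Bool) (k : Fin 2) (z : Fin 3) :
    (MInst r s occ).tau (i, Sum.inr (pol, k)) z = if k = 0 then true else decide (z = 2) := rfl

theorem tau_two (u : MSt r) : (MInst r s occ).tau u 2 = true := by
  rcases u with ⟨i, k | ⟨pol, z⟩⟩ <;> simp

theorem feasible_iff :
    (MInst r s occ).Feasible f ↔ ∀ w, (MInst r s occ).MeetsQuota f w := by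
  refine ⟨fun h w => (h w).2, fun h w => ⟨?_, h w⟩⟩
  rw [← SMTI.typeLoad_eq_card _ _ tau_two]
  exact (h w 2).2.trans (by cases w <;> simp [MInst])

theorem assigned_litCollege_subset (hf : (MInst r s occ).IsMatching f) (i : Fin r) (pol : Bool) :
    (MInst r s occ).assigned f (litCollege i pol) ⊆
      {(i, Sum.inl 0), (i, Sum.inl 1), (i, Sum.inr (pol, 0)), (i, Sum.inr (pol, 1))} := by
  intro u hu
  have hacc := hf u _ ((SMTI.mem_assigned _ _).1 hu)
  rcases u with ⟨i', k | ⟨pol', z⟩⟩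
  · fin_cases k <;> cases pol <;> simp_all [MInst, litCollege]
  · cases pol <;> cases pol' <;> fin_cases z <;> simp_all [MInst, litCollege]

theorem meetsQuota_litCollege_iff (hf : (MInst r s occ).IsMatching f) (i : Fin r) (pol : Bool) :
    (MInst r s occ).MeetsQuota f (litCollege i pol) ↔
      (f (i, Sum.inl 0) = some (litCollege i pol) ∧ f (i, Sum.inl 1) = some (litCollege i pol) ∧
        f (i, Sum.inr (pol, 0)) ≠ some (litCollege i pol) ∧
        f (i, Sum.inr (pol, 1)) ≠ some (litCollege i pol)) ∨
      (f (i, Sum.inl 0) ≠ some (litCollege i pol) ∧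
        f (i, Sum.inl 1) ≠ some (litCollege i pol) ∧
        f (i, Sum.inr (pol, 0)) = some (litCollege i pol) ∧
        f (i, Sum.inr (pol, 1)) = some (litCollege i pol)) := by
  have hload := SMTI.typeLoad_eq_sum_of_assigned_subset _ _ (assigned_litCollege_subset hf i pol)
  simp only [SMTI.MeetsQuota, Fin.forall_fin_succ, IsEmpty.forall_iff, and_true, hload]
  rw [Finset.sum_insert (by simp), Finset.sum_insert (by simp), Finset.sum_insert (by simp),
    Finset.sum_singleton]
  simp only [litCollege] at *
  -- with 0/1 indicators x, y, l₀, l₁ of the four students, the quotas read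
  -- x + l₀ = 1, y + l₀ = 1 and x + y + l₀ + l₁ = 2
  by_cases hx : f (i, Sum.inl 0) = some (Sum.inl (i, if pol then 0 else 1)) <;>
  by_cases hy : f (i, Sum.inl 1) = some (Sum.inl (i, if pol then 0 else 1)) <;>
  by_cases h0 : f (i, Sum.inr (pol, 0)) = some (Sum.inl (i, if pol then 0 else 1)) <;>
  by_cases h1 : f (i, Sum.inr (pol, 1)) = some (Sum.inl (i, if pol then 0 else 1)) <;>
  simp [hx, hy, h0, h1]

theorem meetsQuota_clause_iff (j : Fin s) :
    (MInst r s occ).MeetsQuota f (Sum.inr j) ↔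
      ((MInst r s occ).assigned f (Sum.inr j)).card = 1 := by
  have hcard := SMTI.typeLoad_eq_card (MInst r s occ) f tau_two (Sum.inr j)
  refine ⟨fun h => ?_, fun h z => ?_⟩
  · have := h 2
    simp only [lq_inr, uq_inr, if_true] at this
    omega
  · have := SMTI.typeLoad_le_card (MInst r s occ) f (Sum.inr j) z
    by_cases hz : z = 2
    · subst hz
      simp only [lq_inr, uq_inr, if_true]
      omega
    · simp only [lq_inr, uq_inr, hz, if_false]
      omega

theorem exists_literalStudent_of_eq_clause (hf : (MInst r s occ).IsMatching f) {u : MSt r}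
    {j : Fin s} (hu : f u = some (Sum.inr j)) :
    ∃ ℓ, u = literalStudent ℓ ∧ (occ ℓ).1 = j := by
  have hacc := hf u _ hu
  rcases u with ⟨i, k | ⟨pol, z⟩⟩
  · simp [MInst] at hacc
  · simp only [MInst, reduceCtorEq, Sum.inr.injEq, false_or] at hacc
    exact ⟨(pol, i, z), rfl, hacc.symm⟩

def matchingOfAssignment (occ : Bool × Fin r × Fin 2 ≃ Fin s × Fin 3) (σ : Fin r → Bool)
    (k : Fin s → Fin 3) : MSt r → Option (MCo r s)
  | (i, Sum.inl _) => some (litCollege i (σ i))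
  | (i, Sum.inr (pol, z)) =>
      if σ i ≠ pol then some (litCollege i pol)
      else if k (occ (pol, i, z)).1 = (occ (pol, i, z)).2 then some (Sum.inr (occ (pol, i, z)).1)
      else none

variable {σ : Fin r → Bool} {k : Fin s → Fin 3}

theorem isMatching_matchingOfAssignment :
    (MInst r s occ).IsMatching (matchingOfAssignment occ σ k) := by
  rintro ⟨i, m | ⟨pol, z⟩⟩ w h
  · cases hσ : σ i <;> simp_all [matchingOfAssignment, MInst, litCollege]
  · simp only [matchingOfAssignment] at h
    split_ifs at h <;> simp_all [MInst, litCollege]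

theorem meetsQuota_litCollege_matchingOfAssignment (i : Fin r) (pol : Bool) :
    (MInst r s occ).MeetsQuota (matchingOfAssignment occ σ k) (litCollege i pol) := by
  rw [meetsQuota_litCollege_iff isMatching_matchingOfAssignment]
  by_cases h : σ i = pol
  · simp [matchingOfAssignment, litCollege, h]
  · simp [matchingOfAssignment, litCollege_inj, h]

theorem assigned_clause_matchingOfAssignment {cl : Fin s → Fin 3 → Bool × Fin r}
    (hocc : ∀ (pol : Bool) (i : Fin r) (z : Fin 2),
      cl (occ (pol, i, z)).1 (occ (pol, i, z)).2 = (pol, i))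
    (hk : ∀ j, σ (cl j (k j)).2 = (cl j (k j)).1) (j : Fin s) :
    (MInst r s occ).assigned (matchingOfAssignment occ σ k) (Sum.inr j) =
      {literalStudent (occ.symm (j, k j))} := by
  ext ⟨i, m | ⟨pol, z⟩⟩
  · simp [matchingOfAssignment, litCollege, literalStudent]
  · rw [SMTI.mem_assigned, Finset.mem_singleton,
      show ((i, Sum.inr (pol, z)) : MSt r) = literalStudent (pol, i, z) from rfl,
      literalStudent_injective.eq_iff, Equiv.eq_symm_apply]
    constructor
    · intro h
      simp only [matchingOfAssignment, literalStudent] at h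
      split_ifs at h with hσ hslot <;> simp only [Option.some.injEq, reduceCtorEq, litCollege,
        Sum.inr.injEq] at h
      exact Prod.ext h (h ▸ hslot.symm)
    · intro h
      have hcl : cl j (k j) = (pol, i) := by simpa [h] using hocc pol i z
      have hσ : σ i = pol := by simpa [hcl] using hk j
      simp [matchingOfAssignment, literalStudent, hσ, h]

theorem feasible_matchingOfAssignment {cl : Fin s → Fin 3 → Bool × Fin r}
    (hocc : ∀ (pol : Bool) (i : Fin r) (z : Fin 2),
      cl (occ (pol, i, z)).1 (occ (pol, i, z)).2 = (pol, i))
    (hk : ∀ j, σ (cl j (k j)).2 = (cl j (k j)).1) :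
    (MInst r s occ).Feasible (matchingOfAssignment occ σ k) := by
  rw [feasible_iff]
  rintro (⟨i, b⟩ | j)
  · obtain ⟨pol, hb⟩ : ∃ pol, (Sum.inl (i, b) : MCo r s) = litCollege i pol :=
      ⟨decide (b = 0), by fin_cases b <;> rfl⟩
    rw [hb]
    exact meetsQuota_litCollege_matchingOfAssignment i pol
  · rw [meetsQuota_clause_iff, assigned_clause_matchingOfAssignment hocc hk, Finset.card_singleton]

theorem eq_litCollege_of_eq_clause {i : Fin r} {pol : Bool} {z : Fin 2} {j : Fin s}
    (hf : (MInst r s occ).IsMatching f)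
    (hq : (MInst r s occ).MeetsQuota f (litCollege i pol))
    (hu : f (i, Sum.inr (pol, z)) = some (Sum.inr j)) :
    f (i, Sum.inl 0) = some (litCollege i pol) := by
  have hz : f (i, Sum.inr (pol, z)) ≠ some (litCollege i pol) := by simp [hu, litCollege]
  rcases (meetsQuota_litCollege_iff hf i pol).1 hq with h | h
  · exact h.1
  · fin_cases z <;> simp_all

theorem satisfiable_of_feasible {cl : Fin s → Fin 3 → Bool × Fin r}
    (hocc : ∀ (pol : Bool) (i : Fin r) (z : Fin 2),
      cl (occ (pol, i, z)).1 (occ (pol, i, z)).2 = (pol, i))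
    (hf : (MInst r s occ).IsMatching f) (hq : (MInst r s occ).Feasible f) :
    ∃ σ : Fin r → Bool, ∀ j : Fin s, ∃ z : Fin 3, σ (cl j z).2 = (cl j z).1 := by
  rw [feasible_iff] at hq
  refine ⟨fun i => decide (f (i, Sum.inl 0) = some (litCollege i true)), fun j => ?_⟩
  obtain ⟨u, hu⟩ := Finset.card_eq_one.1 ((meetsQuota_clause_iff j).1 (hq _))
  have hfu : f u = some (Sum.inr j) :=
    (SMTI.mem_assigned _ _).1 (hu ▸ Finset.mem_singleton_self u)
  obtain ⟨⟨pol, i, z⟩, rfl, rfl⟩ := exists_literalStudent_of_eq_clause hf hfu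
  have hx := eq_litCollege_of_eq_clause hf (hq _) hfu
  refine ⟨(occ (pol, i, z)).2, ?_⟩
  rw [hocc]
  cases pol <;> simp [hx, litCollege_inj]

end MInst

/-- A (2,2)-3SAT formula (encoded by the bijection `occ` between
literal occurrences and clause slots, with `cl` giving the literal in each slot) is
satisfiable iff the modified instance admits a feasible matching. -/
theorem stmt10 (r s : ℕ) (cl : Fin s → Fin 3 → Bool × Fin r)
    (occ : Bool × Fin r × Fin 2 ≃ Fin s × Fin 3)
    (hocc : ∀ (pol : Bool) (i : Fin r) (z : Fin 2),
      cl (occ (pol, i, z)).1 (occ (pol, i, z)).2 = (pol, i)) :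
    (∃ σ : Fin r → Bool, ∀ j : Fin s, ∃ z : Fin 3, σ (cl j z).2 = (cl j z).1) ↔
      ∃ f : MSt r → Option (MCo r s),
        (MInst r s occ).IsMatching f ∧ (MInst r s occ).Feasible f := by
  constructor
  · rintro ⟨σ, hσ⟩
    choose k hk using hσ
    exact ⟨MInst.matchingOfAssignment occ σ k, MInst.isMatching_matchingOfAssignment,
      MInst.feasible_matchingOfAssignment hocc hk⟩
  · rintro ⟨f, hf, hq⟩
    exact MInst.satisfiable_of_feasible hocc hf hq
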